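/- For any sort A and type T of order at most 2 such that every sort occurring in T is ⊑ A and every occurrence of A in T is positive (Pos(A,T) ⊆ Pos⁺(T)), we have SPos_A(T) = ∅. -/
import Mathlib


inductive Ty (S : Type*) : Type _
  | sort (A : S) : Ty S
  | arrow (T U : Ty S) : Ty S

/-- The order of a type. -/
def Ty.orderOf {S : Type*} : Ty S → ℕ
  | .sort _ => 0
  | .arrow T U => max (1 + T.orderOf) U.orderOf

/-- A sort `B` occurs in a type. -/
def Ty.occurs {S : Type*} (B : S) : Ty S → Prop
  | .sort A => A = B
  | .arrow T U => T.occurs B ∨ U.occurs B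

mutual
/-- Positions witnessing the dependency on (comp-sn), wrt the sort `A`;
`true` encodes the letter 1, `false` the letter 2. -/
def SPos {S : Type*} [DecidableEq S] (A : S) : Ty S → Set (List Bool)
  | .sort _ => ∅
  | .arrow U V => (fun p => true :: p) '' NPos A U ∪ (fun p => false :: p) '' SPos A V

/-- Positions witnessing the dependency on (comp-neutral), wrt the sort `A`. -/
def NPos {S : Type*} [DecidableEq S] (A : S) : Ty S → Set (List Bool)
  | .sort _ => ∅
  | .arrow U V =>
      (fun p => true :: p) '' SPos A U ∪ (fun p => false :: p) '' (LPos A V ∪ CPos A V)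

/-- Positions witnessing the dependency on (comp-small), wrt the sort `A`.
`CPos A (U→V) = NPos A (U→V)` (unfolded for structural recursion). -/
def CPos {S : Type*} [DecidableEq S] (A : S) : Ty S → Set (List Bool)
  | .sort B => if B = A then {[]} else ∅
  | .arrow U V =>
      (fun p => true :: p) '' SPos A U ∪ (fun p => false :: p) '' (LPos A V ∪ CPos A V)

/-- Positions witnessing the dependency on (comp-lam), wrt the sort `A`
(the summand `CPos A (U→V)` is unfolded for structural recursion). -/
def LPos {S : Type*} [DecidableEq S] (A : S) : Ty S → Set (List Bool)
  | .sort _ => ∅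
  | .arrow U V =>
      ((fun p => true :: p) '' SPos A U ∪ (fun p => false :: p) '' (LPos A V ∪ CPos A V)) ∪
      (fun p => true :: p) '' (SPos A U ∪ NPos A U) ∪
      (fun p => false :: p) '' (LPos A V ∪ CPos A V)
end

mutual
/-- Positive positions of a type. -/
def Ty.posP {S : Type*} : Ty S → Set (List Bool)
  | .sort _ => {[]}
  | .arrow T U => (fun p => true :: p) '' T.posN ∪ (fun p => false :: p) '' U.posP

/-- Negative positions of a type. -/
def Ty.posN {S : Type*} : Ty S → Set (List Bool)
  | .sort _ => ∅
  | .arrow T U => (fun p => true :: p) '' T.posP ∪ (fun p => false :: p) '' U.posN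
end

/-- Positions of the sort `A` in a type. -/
def Ty.posOf {S : Type*} [DecidableEq S] (A : S) : Ty S → Set (List Bool)
  | .sort B => if B = A then {[]} else ∅
  | .arrow T U => (fun p => true :: p) '' T.posOf A ∪ (fun p => false :: p) '' U.posOf A

lemma Ty.eq_sort_of_order_eq_zero {S : Type*} {T : Ty S} (h : T.orderOf = 0) :
    ∃ B, T = Ty.sort B := by
  cases T with
  | sort B => exact ⟨B, rfl⟩
  | arrow U V => simp [Ty.orderOf] at h

lemma aux_npos {S : Type*} [DecidableEq S] (A : S) :
    ∀ T : Ty S, T.orderOf ≤ 1 → T.posOf A ⊆ T.posN →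
      NPos A T = ∅ ∧ CPos A T = ∅ ∧ LPos A T = ∅
  | .sort B, _, hpos => by
      refine ⟨by simp [NPos], ?_, by simp [LPos]⟩
      have hBA : B ≠ A := by
        intro h
        have : ([] : List Bool) ∈ (Ty.sort B).posOf A := by simp [Ty.posOf, h]
        have := hpos this
        simp [Ty.posN] at this
      simp [CPos, hBA]
  | .arrow U V, hord, hpos => by
      simp only [Ty.orderOf, max_le_iff] at hord
      obtain ⟨hU, hV⟩ := hord
      obtain ⟨B, rfl⟩ := Ty.eq_sort_of_order_eq_zero (by omega : U.orderOf = 0)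
      have hposV : V.posOf A ⊆ V.posN := by
        intro p hp
        have : (false :: p) ∈ (Ty.arrow (Ty.sort B) V).posOf A := by
          exact Set.mem_union_right _ ⟨p, hp, rfl⟩
        have h2 := hpos this
        simp only [Ty.posN, Set.mem_union, Set.mem_image, List.cons.injEq] at h2
        rcases h2 with ⟨q, _, h, _⟩ | ⟨q, hq, _, hq'⟩
        · exact absurd h (by simp)
        · rwa [← hq']
      obtain ⟨hN, hC, hL⟩ := aux_npos A V hV hposV
      refine ⟨?_, ?_, ?_⟩ <;>
        simp [NPos, CPos, LPos, SPos, hN, hC, hL]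

lemma spos_aux {S : Type*} [DecidableEq S] (A : S) :
    ∀ T : Ty S, T.orderOf ≤ 2 → T.posOf A ⊆ T.posP → SPos A T = ∅
  | .sort B, _, _ => by simp [SPos]
  | .arrow U V, hord, hpos => by
      simp only [Ty.orderOf, max_le_iff] at hord
      obtain ⟨hU, hV⟩ := hord
      have hposU : U.posOf A ⊆ U.posN := by
        intro p hp
        have : (true :: p) ∈ (Ty.arrow U V).posOf A := by
          exact Set.mem_union_left _ ⟨p, hp, rfl⟩
        have h2 := hpos this
        simp only [Ty.posP, Set.mem_union, Set.mem_image, List.cons.injEq] at h2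
        rcases h2 with ⟨q, hq, _, hq'⟩ | ⟨q, _, h, _⟩
        · rwa [← hq']
        · exact absurd h (by simp)
      have hposV : V.posOf A ⊆ V.posP := by
        intro p hp
        have : (false :: p) ∈ (Ty.arrow U V).posOf A := by
          exact Set.mem_union_right _ ⟨p, hp, rfl⟩
        have h2 := hpos this
        simp only [Ty.posP, Set.mem_union, Set.mem_image, List.cons.injEq] at h2
        rcases h2 with ⟨q, _, h, _⟩ | ⟨q, hq, _, hq'⟩
        · exact absurd h (by simp)
        · rwa [← hq']
      have hN := (aux_npos A U (by omega) hposU).1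
      have hS := spos_aux A V hV hposV
      simp [SPos, hN, hS]

theorem sPos_empty_of_order_le_two {S : Type*} [DecidableEq S]
    (le : S → S → Prop) (hrefl : ∀ a, le a a)
    (htrans : ∀ a b c, le a b → le b c → le a c)
    (A : S) (T : Ty S)
    (horder : T.orderOf ≤ 2)
    (hsorts : ∀ B : S, T.occurs B → le B A)
    (hpos : T.posOf A ⊆ T.posP) :
    SPos A T = ∅ := spos_aux A T horder hpos
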